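/- arXiv:2404.16657 — 3 statements merged into one kernel-verified Lean document; each statement's English description precedes it below -/
import Mathlib

section
/- For all a, a' ∈ E with a ≠ 0 and a' ≠ 0, there exists an E-linear automorphism g of V satisfying g ∘ φ = φ ∘ g, g(L_a) = L_{a'} and g(P_a) = P_{a'} if and only if a = a'. (This is the crystalline Galois side of Theorem 1.1(1): via the functor D_cris, the crystalline representations V(α, h, a) and V(α, h, a') of Gal(Q̄_p/Q_p) are isomorphic if and only if a = a'.) -/
/-!
Since the `αᵢ` are distinct, a `φ`-equivariant `g` preserves each eigenline `E eᵢ`, so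
`g = diag(c)` with all `cᵢ ≠ 0`. The only vectors of `P_{a'}` with vanishing last coordinate
are the multiples of `e₁ + e₂`, so `g(e₁ + e₂) ∈ P_{a'}` forces `c₁ = c₂`; then
`g(e₁ + a e₂ + e₃) ∈ L_{a'}` forces `c₁ a = c₁ a'`.
-/

open Submodule

noncomputable section

variable (E : Type*) [Field E]

/-- The ambient 3-dimensional space `V = E³`. -/
abbrev V3 (E : Type*) [Field E] := Fin 3 → E

/-- The standard basis vectors `e₁, e₂, e₃` (indexed by `0, 1, 2`). -/
def e3 (i : Fin 3) : V3 E := Pi.single i 1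

/-- The diagonal endomorphism `φ` with `φ(eᵢ) = αᵢ • eᵢ`. -/
def phi3 (α : Fin 3 → E) : V3 E →ₗ[E] V3 E where
  toFun v := fun i => α i * v i
  map_add' u v := by funext i; simp [mul_add]
  map_smul' c v := by funext i; simp [smul_eq_mul]; ring

/-- The line `L_a = span{e₁ + a•e₂ + e₃}`. -/
def La (a : E) : Submodule E (V3 E) :=
  span E {e3 E 0 + a • e3 E 1 + e3 E 2}

/-- The plane `P_a = span{e₁ + e₂, e₁ + a•e₂ + e₃}`. -/
def Pa (a : E) : Submodule E (V3 E) :=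
  span E {e3 E 0 + e3 E 1, e3 E 0 + a • e3 E 1 + e3 E 2}

/-- `(F¹, F²)` is a complete flag: `F¹ ⊆ F²` with `dim F¹ = 1`, `dim F² = 2`. -/
def IsCompleteFlag (F1 F2 : Submodule E (V3 E)) : Prop :=
  F1 ≤ F2 ∧ Module.finrank E ↥F1 = 1 ∧ Module.finrank E ↥F2 = 2

/-- The flag `(F¹, F²)` is stable under `φ`. -/
def PhiStable (α : Fin 3 → E) (F1 F2 : Submodule E (V3 E)) : Prop :=
  F1.map (phi3 E α) ≤ F1 ∧ F2.map (phi3 E α) ≤ F2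

/-- Two complete flags `(F¹, F²)` and `(G¹, G²)` are in general position:
`dim (Fⁱ ⊓ Gʲ) = max 0 (i + j - 3)` for `i, j ∈ {1, 2}`. -/
def GenPos (F1 F2 G1 G2 : Submodule E (V3 E)) : Prop :=
  Module.finrank E ↥(F1 ⊓ G1) = 0 ∧ Module.finrank E ↥(F1 ⊓ G2) = 0 ∧
  Module.finrank E ↥(F2 ⊓ G1) = 0 ∧ Module.finrank E ↥(F2 ⊓ G2) = 1

open Function

section Diagonal

variable {E} {ι : Type*} [DecidableEq ι] {α : ι → E} {g : (ι → E) →ₗ[E] (ι → E)}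

theorem apply_single_apply_eq_zero_of_commute_diagonal (hα : Injective α)
    (hcomm : ∀ v, g (fun k => α k * v k) = fun k => α k * g v k) {i j : ι} (hij : i ≠ j) :
    g (Pi.single i 1) j = 0 := by
  have hsingle : (fun k => α k * (Pi.single i (1 : E) : ι → E) k) = α i • Pi.single i 1 := by
    ext k
    by_cases hk : k = i
    · subst hk; simp
    · simp [hk]
  have hj : α i * g (Pi.single i 1) j = α j * g (Pi.single i 1) j := by
    have h := congrFun (hcomm (Pi.single i 1)) j
    rwa [hsingle, map_smul] at h
  have hne : α i - α j ≠ 0 := sub_ne_zero.mpr (hα.ne hij)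
  exact (mul_eq_zero.mp (by rw [sub_mul, hj, sub_self])).resolve_left hne

theorem exists_eq_mul_of_commute_diagonal [Fintype ι] (hα : Injective α)
    (hcomm : ∀ v, g (fun k => α k * v k) = fun k => α k * g v k) :
    ∃ c : ι → E, ∀ v, g v = c * v := by
  refine ⟨fun j => g (Pi.single j 1) j, fun v => funext fun j => ?_⟩
  conv_lhs => rw [pi_eq_sum_univ' v]
  rw [map_sum, Finset.sum_apply, Finset.sum_eq_single j]
  · simp [mul_comm]
  · intro i _ hij
    simp [apply_single_apply_eq_zero_of_commute_diagonal hα hcomm hij]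
  · simp

theorem ne_zero_of_injective_mul {c : ι → E} (hg : Injective g) (hc : ∀ v, g v = c * v) (j : ι) :
    c j ≠ 0 := by
  intro hcj
  have hsingle : g (Pi.single j 1) = g 0 := by
    ext k
    by_cases hk : k = j
    · subst hk; simp [hc, hcj]
    · simp [hc, hk]
  simpa using hg hsingle

end Diagonal

section Flag

variable {E}

theorem e3_add_smul_e3_add_e3 (a b : E) : e3 E 0 + a • e3 E 1 + b • e3 E 2 = ![1, a, b] := by
  ext i; fin_cases i <;> simp [e3]

theorem La_eq_span (a : E) : La E a = span E {![1, a, 1]} := by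
  rw [La, ← e3_add_smul_e3_add_e3 a 1, one_smul]

theorem Pa_eq_span (a : E) : Pa E a = span E {![1, 1, 0], ![1, a, 1]} := by
  rw [Pa, ← e3_add_smul_e3_add_e3 a 1, ← e3_add_smul_e3_add_e3 1 0, one_smul, one_smul,
    zero_smul, add_zero]

theorem eq_of_mul_mem_La_of_mul_mem_Pa {a a' : E} {c : Fin 3 → E} (hc : c 0 ≠ 0)
    (hL : c * ![1, a, 1] ∈ La E a') (hP : c * ![1, 1, 0] ∈ Pa E a') : a = a' := by
  rw [La_eq_span, mem_span_singleton] at hL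
  rw [Pa_eq_span, mem_span_pair] at hP
  obtain ⟨t, ht⟩ := hL
  obtain ⟨s, u, hsu⟩ := hP
  have ht0 : t = c 0 := by simpa using congrFun ht 0
  have ht1 : t * a' = c 1 * a := by simpa using congrFun ht 1
  have hu : u = 0 := by simpa using congrFun hsu 2
  have hs0 : s = c 0 := by simpa [hu] using congrFun hsu 0
  have hs1 : s = c 1 := by simpa [hu] using congrFun hsu 1
  exact mul_left_cancel₀ hc (by linear_combination -ht1 + a' * ht0 + a * (hs1 - hs0))

end Flag

theorem stmt0 (α : Fin 3 → E) (hα : Function.Injective α)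
    (a a' : E) :
    (∃ g : V3 E ≃ₗ[E] V3 E,
        (∀ v, g (phi3 E α v) = phi3 E α (g v)) ∧
        (La E a).map g.toLinearMap = La E a' ∧
        (Pa E a).map g.toLinearMap = Pa E a') ↔ a = a' := by
  constructor
  · rintro ⟨g, hcomm, hL, hP⟩
    obtain ⟨c, hc⟩ := exists_eq_mul_of_commute_diagonal (g := g.toLinearMap) hα hcomm
    have mul_mem {W W' : Submodule E (V3 E)} (hW : W.map g.toLinearMap = W') {w : V3 E}
        (hw : w ∈ W) : c * w ∈ W' := by
      rw [← hc, ← hW]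
      exact mem_map_of_mem hw
    refine eq_of_mul_mem_La_of_mul_mem_Pa (ne_zero_of_injective_mul g.injective hc 0)
      (mul_mem hL ?_) (mul_mem hP ?_)
    · exact La_eq_span a ▸ mem_span_singleton_self _
    · exact Pa_eq_span a ▸ subset_span (by simp)
  · rintro rfl
    exact ⟨LinearEquiv.refl E (V3 E), fun _ => rfl, by simp, by simp⟩
end
end

section
/- For a ∈ E, the complete flag 0 ⊂ L_a ⊂ P_a ⊂ V is in general position with every φ-stable complete flag of V if and only if a ≠ 0 and a ≠ 1. (This characterizes when the Hodge filtration of V(α, h, a) is non-critical for all refinements, i.e. in relative general position with all φ-stable flags, as assumed in Hypothesis 2.1 of the paper.) -/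
open Submodule

noncomputable section

variable (E : Type*) [Field E]

/-! ### Auxiliary lemmas -/

lemma e3_apply (i j : Fin 3) : e3 E i j = if j = i then 1 else 0 := by
  simp [e3, Pi.single_apply]

lemma phi3_apply (α : Fin 3 → E) (v : V3 E) (j : Fin 3) : phi3 E α v j = α j * v j := rfl

lemma phi3_e3 (α : Fin 3 → E) (i : Fin 3) : phi3 E α (e3 E i) = α i • e3 E i := by
  funext j
  by_cases h : j = i <;> simp [phi3_apply, e3_apply, h]

lemma v3_eq_sum (v : V3 E) : v = v 0 • e3 E 0 + v 1 • e3 E 1 + v 2 • e3 E 2 := by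
  funext j
  fin_cases j <;> simp [e3_apply]

lemma top_le_span_e : (⊤ : Submodule E (V3 E)) ≤ span E {e3 E 0, e3 E 1, e3 E 2} := by
  intro v _
  rw [v3_eq_sum E v]
  refine add_mem (add_mem (smul_mem _ _ ?_) (smul_mem _ _ ?_)) (smul_mem _ _ ?_) <;>
    exact subset_span (by simp)

lemma stable_single (α : Fin 3 → E) (hα : Function.Injective α)
    (F : Submodule E (V3 E)) (hF : F.map (phi3 E α) ≤ F)
    {v : V3 E} (hv : v ∈ F) (i : Fin 3) (hvi : v i ≠ 0) : e3 E i ∈ F := by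
  obtain ⟨j, k, hij, hik, hjk, hcover⟩ :
      ∃ j k : Fin 3, i ≠ j ∧ i ≠ k ∧ j ≠ k ∧ ∀ m : Fin 3, m = i ∨ m = j ∨ m = k := by
    fin_cases i
    · exact ⟨1, 2, by decide, by decide, by decide, by decide⟩
    · exact ⟨0, 2, by decide, by decide, by decide, by decide⟩
    · exact ⟨0, 1, by decide, by decide, by decide, by decide⟩
  have hmap : ∀ w ∈ F, phi3 E α w ∈ F := fun w hw => hF ⟨w, hw, rfl⟩
  set w1 : V3 E := phi3 E α v - α j • v with hw1
  have hw1F : w1 ∈ F := F.sub_mem (hmap v hv) (F.smul_mem _ hv)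
  set w2 : V3 E := phi3 E α w1 - α k • w1 with hw2
  have hw2F : w2 ∈ F := F.sub_mem (hmap w1 hw1F) (F.smul_mem _ hw1F)
  have h1 : ∀ m, w1 m = (α m - α j) * v m := by
    intro m; simp [hw1, phi3_apply]; ring
  have hc : w2 = ((α i - α j) * (α i - α k) * v i) • e3 E i := by
    funext m
    have h2 : w2 m = (α m - α k) * ((α m - α j) * v m) := by
      simp [hw2, phi3_apply, h1]; ring
    rcases hcover m with rfl | rfl | rfl
    · simp [h2, e3_apply]; ring
    · simp [h2, e3_apply, Ne.symm hij]
    · simp [h2, e3_apply, Ne.symm hik]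
  have hne : (α i - α j) * (α i - α k) * v i ≠ 0 :=
    mul_ne_zero (mul_ne_zero (sub_ne_zero.2 fun h => hij (hα h))
      (sub_ne_zero.2 fun h => hik (hα h))) hvi
  have := F.smul_mem ((α i - α j) * (α i - α k) * v i)⁻¹ hw2F
  rwa [hc, smul_smul, inv_mul_cancel₀ hne, one_smul] at this

def uv : V3 E := ![1, 1, 0]
def wv (a : E) : V3 E := ![1, a, 1]

lemma uv_eq : e3 E 0 + e3 E 1 = uv E := by
  funext j; fin_cases j <;> simp [e3_apply, uv]

lemma wv_eq (a : E) : e3 E 0 + a • e3 E 1 + e3 E 2 = wv E a := by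
  funext j; fin_cases j <;> simp [e3_apply, wv]

lemma La_eq (a : E) : La E a = span E {wv E a} := by rw [La, wv_eq]

lemma Pa_eq (a : E) : Pa E a = span E {uv E, wv E a} := by rw [Pa, uv_eq, wv_eq]

lemma e3_ne_zero (i : Fin 3) : e3 E i ≠ 0 := by
  intro h
  have := congrFun h i
  simp [e3_apply] at this

lemma wv_ne_zero (a : E) : wv E a ≠ 0 := by
  intro h
  have := congrFun h 0
  simp [wv] at this

lemma line_inf_bot (x : V3 E) (p : Submodule E (V3 E)) (hx : x ∉ p) :
    span E {x} ⊓ p = ⊥ := by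
  rw [eq_bot_iff]
  rintro y ⟨hy1, hy2⟩
  obtain ⟨c, rfl⟩ := mem_span_singleton.1 hy1
  rcases eq_or_ne c 0 with rfl | hc
  · simp
  · exact absurd (by simpa [smul_smul, inv_mul_cancel₀ hc] using p.smul_mem c⁻¹ hy2) hx

lemma finrank_span_e_pair (i j : Fin 3) (hij : i ≠ j) :
    Module.finrank E ↥(span E {e3 E i, e3 E j}) = 2 := by
  have hli : LinearIndependent E ![e3 E i, e3 E j] := by
    rw [LinearIndependent.pair_iff]
    intro s t hst
    have hi := congrFun hst i
    have hj := congrFun hst j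
    simp [e3_apply, hij, Ne.symm hij] at hi hj
    exact ⟨hi, hj⟩
  have hr : Set.range ![e3 E i, e3 E j] = {e3 E i, e3 E j} := by
    simp [Matrix.range_cons, Matrix.range_empty]; exact Set.pair_comm _ _
  rw [← hr, finrank_span_eq_card hli]
  simp

lemma finrank_Pa (a : E) : Module.finrank E ↥(Pa E a) = 2 := by
  rw [Pa_eq]
  have hli : LinearIndependent E ![uv E, wv E a] := by
    rw [LinearIndependent.pair_iff]
    intro s t hst
    have h2 := congrFun hst 2
    have h0 := congrFun hst 0
    simp [uv, wv] at h2 h0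
    subst h2
    simp at h0 ⊢
    simpa using h0
  have hr : Set.range ![uv E, wv E a] = {uv E, wv E a} := by
    simp [Matrix.range_cons, Matrix.range_empty]; exact Set.pair_comm _ _
  rw [← hr, finrank_span_eq_card hli]
  simp

lemma e3_not_mem_Pa (a : E) (ha1 : a ≠ 1) (i : Fin 3) : e3 E i ∉ Pa E a := by
  rw [Pa_eq]
  intro h
  obtain ⟨s, t, hst⟩ := mem_span_pair.1 h
  have h0 := congrFun hst 0
  have h1 := congrFun hst 1
  have h2 := congrFun hst 2
  fin_cases i <;> simp [uv, wv, e3_apply] at h0 h1 h2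
  · subst h2; simp_all
  · subst h2; simp_all
  · subst h2
    apply ha1
    have : s = -1 := by linear_combination h0
    subst this
    linear_combination h1

lemma line_classify (α : Fin 3 → E) (hα : Function.Injective α)
    (F1 : Submodule E (V3 E)) (h1 : Module.finrank E ↥F1 = 1)
    (hst : F1.map (phi3 E α) ≤ F1) : ∃ i, F1 = span E {e3 E i} := by
  have hbot : F1 ≠ ⊥ := by
    intro h; rw [h, finrank_bot] at h1; simp at h1
  obtain ⟨v, hv, hv0⟩ := Submodule.exists_mem_ne_zero_of_ne_bot hbot
  obtain ⟨i, hvi⟩ : ∃ i, v i ≠ 0 := by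
    by_contra h
    push_neg at h
    exact hv0 (funext fun i => h i)
  refine ⟨i, ?_⟩
  have hei : e3 E i ∈ F1 := stable_single E α hα F1 hst hv i hvi
  have hle : span E {e3 E i} ≤ F1 := span_le.2 (by simpa using hei)
  exact (Submodule.eq_of_le_of_finrank_le hle
    (by rw [h1, finrank_span_singleton (e3_ne_zero E i)])).symm

/-- The complete flag `0 ⊂ L_a ⊂ P_a ⊂ V` is in general position with every
`φ`-stable complete flag of `V` iff `a ≠ 0` and `a ≠ 1`. -/
theorem stmt1 (α : Fin 3 → E) (hα0 : ∀ i, α i ≠ 0) (hα : Function.Injective α) (a : E) :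
    (∀ F1 F2 : Submodule E (V3 E), IsCompleteFlag E F1 F2 → PhiStable E α F1 F2 →
        GenPos E (La E a) (Pa E a) F1 F2) ↔ (a ≠ 0 ∧ a ≠ 1) := by
  have hfin3 : Module.finrank E (V3 E) = 3 := Module.finrank_fin_fun E
  constructor
  · intro h
    constructor
    · -- a ≠ 0
      rintro rfl
      have hflag : IsCompleteFlag E (span E {e3 E 0}) (span E {e3 E 0, e3 E 2}) := by
        refine ⟨span_mono (by simp), finrank_span_singleton (e3_ne_zero E 0),
          finrank_span_e_pair E 0 2 (by decide)⟩
      have hstab : PhiStable E α (span E {e3 E 0}) (span E {e3 E 0, e3 E 2}) := by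
        constructor
        · rw [map_span_le]
          rintro m rfl
          rw [phi3_e3]
          exact smul_mem _ _ (subset_span rfl)
        · rw [map_span_le]
          rintro m (rfl | rfl) <;> rw [phi3_e3] <;>
            exact smul_mem _ _ (subset_span (by simp))
      obtain ⟨-, h2, -, -⟩ := h _ _ hflag hstab
      have hmem : wv E 0 ∈ span E ({e3 E 0, e3 E 2} : Set (V3 E)) := by
        refine mem_span_pair.2 ⟨1, 1, ?_⟩
        funext j; fin_cases j <;> simp [e3_apply, wv]
      have hle : La E 0 ≤ span E ({e3 E 0, e3 E 2} : Set (V3 E)) := by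
        rw [La_eq]
        exact span_le.2 (by simpa using hmem)
      rw [inf_eq_left.2 hle, La_eq, finrank_span_singleton (wv_ne_zero E 0)] at h2
      exact one_ne_zero h2
    · -- a ≠ 1
      rintro rfl
      have hflag : IsCompleteFlag E (span E {e3 E 2}) (span E {e3 E 2, e3 E 0}) := by
        refine ⟨span_mono (by simp), finrank_span_singleton (e3_ne_zero E 2),
          finrank_span_e_pair E 2 0 (by decide)⟩
      have hstab : PhiStable E α (span E {e3 E 2}) (span E {e3 E 2, e3 E 0}) := by
        constructor
        · rw [map_span_le]
          rintro m rfl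
          rw [phi3_e3]
          exact smul_mem _ _ (subset_span rfl)
        · rw [map_span_le]
          rintro m (rfl | rfl) <;> rw [phi3_e3] <;>
            exact smul_mem _ _ (subset_span (by simp))
      obtain ⟨-, -, h3, -⟩ := h _ _ hflag hstab
      have hmem : e3 E 2 ∈ Pa E 1 := by
        rw [Pa_eq]
        refine mem_span_pair.2 ⟨-1, 1, ?_⟩
        funext j; fin_cases j <;> simp [e3_apply, uv, wv]
      have hle : span E ({e3 E 2} : Set (V3 E)) ≤ Pa E 1 :=
        span_le.2 (by simpa using hmem)
      rw [inf_eq_right.2 hle, finrank_span_singleton (e3_ne_zero E 2)] at h3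
      exact one_ne_zero h3
  · rintro ⟨ha0, ha1⟩ F1 F2 ⟨hle, h1, h2⟩ ⟨hs1, hs2⟩
    obtain ⟨i, rfl⟩ := line_classify E α hα F1 h1 hs1
    -- wv a ∉ F2
    have hwF2 : wv E a ∉ F2 := by
      intro hw
      have he0 : e3 E 0 ∈ F2 := stable_single E α hα F2 hs2 hw 0 (by simp [wv])
      have he1 : e3 E 1 ∈ F2 := stable_single E α hα F2 hs2 hw 1 (by simpa [wv] using ha0)
      have he2 : e3 E 2 ∈ F2 := stable_single E α hα F2 hs2 hw 2 (by simp [wv])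
      have htop : F2 = ⊤ := by
        refine le_antisymm le_top ?_
        refine le_trans (top_le_span_e E) (span_le.2 ?_)
        rintro m (rfl | rfl | rfl) <;> assumption
      rw [htop, finrank_top, hfin3] at h2
      norm_num at h2
    -- condition 2
    have c2 : La E a ⊓ F2 = ⊥ := by
      rw [La_eq]; exact line_inf_bot E _ _ hwF2
    -- condition 1
    have c1 : La E a ⊓ span E {e3 E i} = ⊥ :=
      eq_bot_iff.2 (le_trans (inf_le_inf_left _ hle) c2.le)
    -- condition 3
    have c3 : Pa E a ⊓ span E {e3 E i} = ⊥ := by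
      rw [inf_comm]
      exact line_inf_bot E _ _ (e3_not_mem_Pa E a ha1 i)
    -- condition 4 : Pa ≠ F2
    have hPaF2 : Pa E a ≠ F2 := by
      intro hEq
      have huv : uv E ∈ F2 := by
        rw [← hEq, Pa_eq]; exact subset_span (by simp)
      have hphi : phi3 E α (uv E) ∈ Pa E a := by
        rw [hEq]; exact hs2 ⟨uv E, huv, rfl⟩
      rw [Pa_eq] at hphi
      obtain ⟨s, t, hst⟩ := mem_span_pair.1 hphi
      have h0 := congrFun hst 0
      have h1' := congrFun hst 1
      have h2' := congrFun hst 2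
      simp [uv, wv, phi3_apply] at h0 h1' h2'
      subst h2'
      simp at h0 h1'
      exact (by decide : (0 : Fin 3) ≠ 1) (hα (h0.symm.trans h1'))
    have hsup : Module.finrank E ↥(Pa E a ⊔ F2) = 3 := by
      have hlt : Pa E a < Pa E a ⊔ F2 := by
        rcases lt_or_eq_of_le (le_sup_left : Pa E a ≤ Pa E a ⊔ F2) with h | h
        · exact h
        · exfalso
          apply hPaF2
          have hF2le : F2 ≤ Pa E a := by rw [h]; exact le_sup_right
          exact (Submodule.eq_of_le_of_finrank_le hF2le
            (by rw [h2, finrank_Pa])).symm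
      have hlow : 2 < Module.finrank E ↥(Pa E a ⊔ F2) := by
        calc 2 = Module.finrank E ↥(Pa E a) := (finrank_Pa E a).symm
          _ < _ := Submodule.finrank_lt_finrank_of_lt hlt
      have hhigh : Module.finrank E ↥(Pa E a ⊔ F2) ≤ 3 := by
        have := Submodule.finrank_le (Pa E a ⊔ F2)
        omega
      omega
    have c4 : Module.finrank E ↥(Pa E a ⊓ F2) = 1 := by
      have := Submodule.finrank_sup_add_finrank_inf_eq (Pa E a) F2
      rw [hsup, finrank_Pa, h2] at this
      omega
    exact ⟨by rw [c1, finrank_bot], by rw [c2, finrank_bot],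
      by rw [c3, finrank_bot], c4⟩
end
end

section
/- For every complete flag (L, P) of V in general position with every φ-stable complete flag of V, there exists a unique a ∈ E with a ≠ 0 and a ≠ 1 for which there is an E-linear automorphism g of V satisfying g ∘ φ = φ ∘ g, g(L_a) = L and g(P_a) = P. (This is the paper's parametrization: the set of non-critical crystalline representations of fixed regular Hodge–Tate weights h and Frobenius eigenvalues α is exactly {V(α, h, a)}, and the Hodge parameter a is a complete invariant.) -/
open Submodule

noncomputable section

variable (E : Type*) [Field E]

lemma li_e3 {i j : Fin 3} (hij : i ≠ j) : LinearIndependent E ![e3 E i, e3 E j] := by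
  rw [LinearIndependent.pair_iff]
  intro s t hst
  constructor
  · have := congrFun hst i
    simpa [e3, Pi.single_eq_of_ne hij] using this
  · have := congrFun hst j
    simpa [e3, Pi.single_eq_of_ne hij.symm] using this

lemma diag3_aux (c : Fin 3 → E) (hc : ∀ i, c i ≠ 0) :
    ∃ g : V3 E ≃ₗ[E] V3 E, ∀ v i, g v i = c i * v i := by
  refine ⟨⟨⟨⟨fun v i => c i * v i, ?_⟩, ?_⟩, fun v i => (c i)⁻¹ * v i, ?_, ?_⟩, fun _ _ => rfl⟩
  · intro u v; funext i; simp [mul_add]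
  · intro r v; funext i; simp [smul_eq_mul]; ring
  · intro v; funext i; simp only []
    show (c i)⁻¹ * (c i * v i) = v i
    rw [← mul_assoc, inv_mul_cancel₀ (hc i), one_mul]
  · intro v; funext i; simp only []
    show c i * ((c i)⁻¹ * v i) = v i
    rw [← mul_assoc, mul_inv_cancel₀ (hc i), one_mul]

lemma stable_flag (α : Fin 3 → E) {i j : Fin 3} (hij : i ≠ j) :
    IsCompleteFlag E (span E {e3 E i}) (span E {e3 E i, e3 E j}) ∧
    PhiStable E α (span E {e3 E i}) (span E {e3 E i, e3 E j}) := by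
  refine ⟨⟨span_mono (by simp), finrank_span_singleton (e3_ne_zero E i), ?_⟩, ?_, ?_⟩
  · have h := finrank_span_eq_card (li_e3 E hij)
    have hr : Set.range ![e3 E i, e3 E j] = {e3 E i, e3 E j} := by
      simp [Set.pair_comm]
    rw [hr] at h
    simpa using h
  · rw [Submodule.map_span, span_le]
    rintro _ ⟨x, rfl, rfl⟩
    rw [phi3_e3]
    exact smul_mem _ _ (subset_span rfl)
  · rw [Submodule.map_span, span_le]
    rintro _ ⟨x, hx, rfl⟩
    rcases hx with rfl | rfl
    · rw [phi3_e3]; exact smul_mem _ _ (subset_span (by simp))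
    · rw [phi3_e3]; exact smul_mem _ _ (subset_span (by simp))

/-- For every complete flag `(L, P)` in general position with every `φ`-stable
complete flag, there is a unique `a ∉ {0, 1}` for which some `E`-linear automorphism `g` of `V`
commuting with `φ` carries `(L_a, P_a)` to `(L, P)`. -/
theorem stmt4 (α : Fin 3 → E) (hα0 : ∀ i, α i ≠ 0) (hα : Function.Injective α)
    (L P : Submodule E (V3 E)) (hLP : IsCompleteFlag E L P)
    (hgen : ∀ F1 F2 : Submodule E (V3 E), IsCompleteFlag E F1 F2 → PhiStable E α F1 F2 →
      GenPos E L P F1 F2) :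
    ∃! a : E, a ≠ 0 ∧ a ≠ 1 ∧ ∃ g : V3 E ≃ₗ[E] V3 E,
      (∀ v, g (phi3 E α v) = phi3 E α (g v)) ∧
      (La E a).map g.toLinearMap = L ∧
      (Pa E a).map g.toLinearMap = P := by
  classical
  obtain ⟨hLsubP, hLr, hPr⟩ := hLP
  have hbot : ∀ S : Submodule E (V3 E), Module.finrank E ↥S = 0 → S = ⊥ := fun S h =>
    Submodule.finrank_eq_zero.mp h
  have H01 := hgen _ _ (stable_flag E α (i := 0) (j := 1) (by decide)).1
    (stable_flag E α (by decide)).2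
  have H12 := hgen _ _ (stable_flag E α (i := 1) (j := 2) (by decide)).1
    (stable_flag E α (by decide)).2
  have H20 := hgen _ _ (stable_flag E α (i := 2) (j := 0) (by decide)).1
    (stable_flag E α (by decide)).2
  -- bottom facts
  have bL01 : L ⊓ span E {e3 E 0, e3 E 1} = ⊥ := hbot _ H01.2.1
  have bL12 : L ⊓ span E {e3 E 1, e3 E 2} = ⊥ := hbot _ H12.2.1
  have bL20 : L ⊓ span E {e3 E 2, e3 E 0} = ⊥ := hbot _ H20.2.1
  have bP0 : P ⊓ span E {e3 E 0} = ⊥ := hbot _ H01.2.2.1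
  have bP1 : P ⊓ span E {e3 E 1} = ⊥ := hbot _ H12.2.2.1
  have bP2 : P ⊓ span E {e3 E 2} = ⊥ := hbot _ H20.2.2.1
  have rP01 : Module.finrank E ↥(P ⊓ span E {e3 E 0, e3 E 1}) = 1 := H01.2.2.2
  -- a generator v of L
  obtain ⟨v, hvL, hv⟩ := (Submodule.ne_bot_iff L).mp (by
    intro h; rw [h] at hLr; simp at hLr)
  -- coordinates of v are nonzero
  have hv0 : v 0 ≠ 0 := by
    intro h0
    have hmem : v ∈ span E {e3 E 1, e3 E 2} := mem_span_pair.mpr ⟨v 1, v 2, by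
      funext k; fin_cases k <;> simp [e3, Pi.single_apply, h0]⟩
    have : v ∈ (⊥ : Submodule E (V3 E)) := bL12 ▸ Submodule.mem_inf.mpr ⟨hvL, hmem⟩
    exact hv (by simpa using this)
  have hv1 : v 1 ≠ 0 := by
    intro h0
    have hmem : v ∈ span E {e3 E 2, e3 E 0} := mem_span_pair.mpr ⟨v 2, v 0, by
      funext k; fin_cases k <;> simp [e3, Pi.single_apply, h0]⟩
    have : v ∈ (⊥ : Submodule E (V3 E)) := bL20 ▸ Submodule.mem_inf.mpr ⟨hvL, hmem⟩
    exact hv (by simpa using this)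
  have hv2 : v 2 ≠ 0 := by
    intro h0
    have hmem : v ∈ span E {e3 E 0, e3 E 1} := mem_span_pair.mpr ⟨v 0, v 1, by
      funext k; fin_cases k <;> simp [e3, Pi.single_apply, h0]⟩
    have : v ∈ (⊥ : Submodule E (V3 E)) := bL01 ▸ Submodule.mem_inf.mpr ⟨hvL, hmem⟩
    exact hv (by simpa using this)
  -- a nonzero vector w in P ∩ plane{e₀,e₁}
  obtain ⟨w, hwmem, hw⟩ := (Submodule.ne_bot_iff (P ⊓ span E {e3 E 0, e3 E 1})).mp (by
    intro h; rw [h] at rP01; simp at rP01)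
  obtain ⟨hwP, hwpl⟩ := Submodule.mem_inf.mp hwmem
  have hw2 : w 2 = 0 := by
    obtain ⟨s, t, hst⟩ := mem_span_pair.mp hwpl
    have := congrFun hst 2
    simpa [e3, Pi.single_apply] using this.symm
  have hw0 : w 0 ≠ 0 := by
    intro h0
    have hmem : w ∈ span E {e3 E 1} := mem_span_singleton.mpr ⟨w 1, by
      funext k; fin_cases k <;> simp [e3, Pi.single_apply, h0, hw2]⟩
    have : w ∈ (⊥ : Submodule E (V3 E)) := bP1 ▸ Submodule.mem_inf.mpr ⟨hwP, hmem⟩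
    exact hw (by simpa using this)
  have hw1 : w 1 ≠ 0 := by
    intro h0
    have hmem : w ∈ span E {e3 E 0} := mem_span_singleton.mpr ⟨w 0, by
      funext k; fin_cases k <;> simp [e3, Pi.single_apply, h0, hw2]⟩
    have : w ∈ (⊥ : Submodule E (V3 E)) := bP0 ▸ Submodule.mem_inf.mpr ⟨hwP, hmem⟩
    exact hw (by simpa using this)
  -- L = span {v}, P = span {w, v}
  have hLspan : span E {v} = L :=
    eq_of_le_of_finrank_eq ((span_singleton_le_iff_mem _ _).mpr hvL)
      (by rw [finrank_span_singleton hv, hLr])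
  have hliwv : LinearIndependent E ![w, v] := by
    rw [LinearIndependent.pair_iff]
    intro s t hst
    have h2 := congrFun hst 2
    simp [hw2] at h2
    have ht : t = 0 := by
      rcases h2 with h | h
      · exact h
      · exact absurd h hv2
    subst ht
    have h0 := congrFun hst 0
    simp at h0
    have hs : s = 0 := by
      rcases h0 with h | h
      · exact h
      · exact absurd h hw0
    exact ⟨hs, rfl⟩
  have hPspan : span E {w, v} = P := by
    refine eq_of_le_of_finrank_eq (span_le.mpr ?_) ?_
    · rintro x (rfl | rfl)
      · exact hwP
      · exact hLsubP hvL
    · have h := finrank_span_eq_card hliwv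
      have hr : Set.range ![w, v] = {w, v} := by simp [Set.pair_comm]
      rw [hr] at h
      rw [h, hPr]
      simp
  -- the Hodge parameter
  set a : E := v 1 * w 0 / (v 0 * w 1) with ha_def
  have ha0 : a ≠ 0 := div_ne_zero (mul_ne_zero hv1 hw0) (mul_ne_zero hv0 hw1)
  have ha1 : a ≠ 1 := by
    intro h1
    have key : v 1 * w 0 = v 0 * w 1 := by
      rw [ha_def, div_eq_one_iff_eq (mul_ne_zero hv0 hw1)] at h1
      exact h1
    have hzP : w 0 • v - v 0 • w ∈ P := sub_mem (smul_mem _ _ (hLsubP hvL)) (smul_mem _ _ hwP)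
    have hz2 : w 0 • v - v 0 • w = (w 0 * v 2) • e3 E 2 := by
      funext k; fin_cases k
      · simp [e3, Pi.single_apply]; ring
      · simp [e3, Pi.single_apply]; linear_combination key
      · simp [e3, Pi.single_apply, hw2]
    have hmem : w 0 • v - v 0 • w ∈ span E {e3 E 2} := by
      rw [hz2]; exact smul_mem _ _ (mem_span_singleton_self _)
    have : w 0 • v - v 0 • w ∈ (⊥ : Submodule E (V3 E)) :=
      bP2 ▸ Submodule.mem_inf.mpr ⟨hzP, hmem⟩
    have hz0 : w 0 • v - v 0 • w = 0 := by simpa using this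
    have := congrFun hz0 2
    simp [hw2] at this
    rcases this with h | h
    · exact hw0 h
    · exact hv2 h
  -- the diagonal automorphism g
  obtain ⟨g, hg⟩ := diag3_aux E ![v 0, v 0 * w 1 / w 0, v 2] (by
    intro i; fin_cases i
    · simpa using hv0
    · simpa using div_ne_zero (mul_ne_zero hv0 hw1) hw0
    · simpa using hv2)
  have hgu : g (e3 E 0 + a • e3 E 1 + e3 E 2) = v := by
    funext k; fin_cases k
    · simp [hg, e3, Pi.single_apply]
    · simp [hg, e3, Pi.single_apply, ha_def]
      field_simp
    · simp [hg, e3, Pi.single_apply]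
  have hgp1 : g (e3 E 0 + e3 E 1) = (v 0 / w 0) • w := by
    funext k; fin_cases k
    · simp [hg, e3, Pi.single_apply]
      field_simp
    · simp [hg, e3, Pi.single_apply]
      field_simp
    · simp [hg, e3, Pi.single_apply, hw2]
  refine ⟨a, ⟨ha0, ha1, g, ?_, ?_, ?_⟩, ?_⟩
  · -- commutes with φ
    intro u
    funext i
    simp only [hg, phi3, LinearMap.coe_mk, AddHom.coe_mk]
    ring
  · -- maps L_a to L
    rw [La, Submodule.map_span, Set.image_singleton]
    simp only [LinearEquiv.coe_coe]
    rw [hgu]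
    exact hLspan
  · -- maps P_a to P
    rw [Pa, Submodule.map_span, Set.image_insert_eq, Set.image_singleton]
    simp only [LinearEquiv.coe_coe]
    rw [hgp1, hgu]
    rw [show ({(v 0 / w 0) • w, v} : Set (V3 E)) = insert ((v 0 / w 0) • w) {v} from rfl,
      span_insert, span_singleton_smul_eq (isUnit_iff_ne_zero.mpr (div_ne_zero hv0 hw0)) w,
      ← span_insert]
    exact hPspan
  -- uniqueness
  rintro b ⟨hb0, hb1, g', hcomm, hLm, hPm⟩
  have hdiag : ∀ i j : Fin 3, j ≠ i → g' (e3 E i) j = 0 := by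
    intro i j hji
    have h := hcomm (e3 E i)
    rw [phi3_e3, map_smul] at h
    have h2 := congrFun h j
    simp only [Pi.smul_apply, smul_eq_mul, phi3, LinearMap.coe_mk, AddHom.coe_mk] at h2
    by_contra hne
    exact hji (hα (mul_right_cancel₀ hne h2)).symm
  -- g'(u_b) ∈ span {v}
  have hub : g' (e3 E 0 + b • e3 E 1 + e3 E 2) ∈ span E {v} := by
    rw [hLspan, ← hLm]
    exact ⟨_, subset_span rfl, rfl⟩
  obtain ⟨μ, hμ⟩ := mem_span_singleton.mp hub
  have hμ0 : μ ≠ 0 := by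
    intro h0
    rw [h0, zero_smul] at hμ
    have : e3 E 0 + b • e3 E 1 + e3 E 2 = 0 := g'.injective (by rw [map_zero]; exact hμ.symm)
    have := congrFun this 0
    simp [e3, Pi.single_apply] at this
  -- g'(e₀+e₁) ∈ span {w, v}
  have hp1 : g' (e3 E 0 + e3 E 1) ∈ span E {w, v} := by
    rw [hPspan, ← hPm]
    exact ⟨_, subset_span (Set.mem_insert _ _), rfl⟩
  obtain ⟨s, t, hst⟩ := mem_span_pair.mp hp1
  -- coordinate computations
  have hub0 : g' (e3 E 0 + b • e3 E 1 + e3 E 2) 0 = g' (e3 E 0) 0 := by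
    simp [map_add, map_smul, hdiag 1 0 (by decide), hdiag 2 0 (by decide)]
  have hub1 : g' (e3 E 0 + b • e3 E 1 + e3 E 2) 1 = b * g' (e3 E 1) 1 := by
    simp [map_add, map_smul, hdiag 0 1 (by decide), hdiag 2 1 (by decide)]
  have hst2 := congrFun hst 2
  have hst0 := congrFun hst 0
  have hst1 := congrFun hst 1
  simp only [Pi.add_apply, Pi.smul_apply, smul_eq_mul, map_add,
    hdiag 0 2 (by decide), hdiag 1 2 (by decide), hdiag 1 0 (by decide), hdiag 0 1 (by decide),
    hw2, add_zero, mul_zero, zero_add] at hst2 hst0 hst1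
  -- hst2 : t * v 2 = 0
  have ht : t = 0 := by
    rcases mul_eq_zero.mp hst2 with h | h
    · exact h
    · exact absurd h hv2
  subst ht
  simp only [zero_mul, add_zero] at hst0 hst1
  -- hst0 : s * w 0 = g' e₀ 0 ; hst1 : s * w 1 = g' e₁ 1
  have E0 := congrFun hμ 0
  have E1 := congrFun hμ 1
  simp only [Pi.smul_apply, smul_eq_mul, hub0, hub1] at E0 E1
  -- E0 : μ * v 0 = g' e₀ 0 ; E1 : μ * v 1 = b * g' e₁ 1
  rw [← hst0] at E0
  rw [← hst1] at E1
  have hs : s ≠ 0 := by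
    intro h0
    rw [h0, zero_mul] at E0
    exact mul_ne_zero hμ0 hv0 E0
  have key : b * (w 1) * (v 0) * s = v 1 * (w 0) * s := by
    linear_combination v 1 * E0 - v 0 * E1
  have key2 := mul_right_cancel₀ hs key
  rw [ha_def, eq_div_iff (mul_ne_zero hv0 hw1)]
  linear_combination key2
end
end
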